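/- Assume P is transitive and irreflexive. Then the Strong Supplementation Principle holds if and only if for every x ∈ U and S : Set U: if for every u, u overlaps x exactly when some element of S overlaps u, then Sum x S. -/

import Mathlib

/-! If SSP fails for `x, y`, i.e. every ingrediens of `x` overlaps `y`, then `y` satisfies the
fusion condition for `{x} ∪ {z | Ing z y}`; being a sum of that set makes `x` an ingrediens of `y`.
Conversely, under SSP every element `s` of `S` is an ingrediens of a fusion `x`: otherwise SSP
yields a part of `s` exterior to `x`, yet overlapping `s ∈ S`. -/

variable {U : Type*}

/-- `x` is an ingrediens of `y`. -/
def Ing (P : U → U → Prop) (x y : U) : Prop := x = y ∨ P x y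

/-- `x` and `y` overlap. -/
def Ov (P : U → U → Prop) (x y : U) : Prop := ∃ z, Ing P z x ∧ Ing P z y

/-- `x` is exterior to `y`. -/
def MExt (P : U → U → Prop) (x y : U) : Prop := ¬ Ov P x y

/-- `x` is a mereological sum of all elements of `S`. -/
def MSum (P : U → U → Prop) (x : U) (S : Set U) : Prop :=
  (∀ s ∈ S, Ing P s x) ∧ ∀ u, Ing P u x → ∃ s ∈ S, Ov P s u

/-- `x` is a supremum (least upper bound) of `S`. -/
def MSup (P : U → U → Prop) (x : U) (S : Set U) : Prop :=
  (∀ s ∈ S, Ing P s x) ∧ ∀ u, (∀ s ∈ S, Ing P s u) → Ing P x u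

/-- `x` and `y` cross (properly overlap). -/
def POv (P : U → U → Prop) (x y : U) : Prop :=
  x ≠ y ∧ ¬ P x y ∧ ¬ P y x ∧ ∃ z, P z x ∧ P z y

variable {P : U → U → Prop} {x y z : U}

def StrongSupplementation (P : U → U → Prop) : Prop :=
  ∀ x y, ¬ Ing P x y → ∃ z, Ing P z x ∧ MExt P z y

lemma Ing.refl (P : U → U → Prop) (x : U) : Ing P x x := Or.inl rfl

lemma Ing.trans (htrans : ∀ x y z, P x y → P y z → P x z)
    (hxy : Ing P x y) (hyz : Ing P y z) : Ing P x z := by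
  rcases hxy with rfl | hxy
  · exact hyz
  · rcases hyz with rfl | hyz
    · exact Or.inr hxy
    · exact Or.inr (htrans _ _ _ hxy hyz)

lemma Ov.of_ing (h : Ing P x y) : Ov P x y := ⟨x, Ing.refl P x, h⟩

lemma Ov.symm (h : Ov P x y) : Ov P y x :=
  let ⟨w, hwx, hwy⟩ := h
  ⟨w, hwy, hwx⟩

lemma Ov.mono_right (htrans : ∀ x y z, P x y → P y z → P x z)
    (h : Ov P x y) (hyz : Ing P y z) : Ov P x z :=
  let ⟨w, hwx, hwy⟩ := h
  ⟨w, hwx, hwy.trans htrans hyz⟩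

lemma StrongSupplementation.msum_of_forall_ov_iff (hssp : StrongSupplementation P)
    {S : Set U} (hfus : ∀ u, Ov P u x ↔ ∃ s ∈ S, Ov P s u) : MSum P x S := by
  refine ⟨fun s hs => ?_, fun u hu => (hfus u).mp (Ov.of_ing hu)⟩
  by_contra hsx
  obtain ⟨z, hzs, hzx⟩ := hssp s x hsx
  exact hzx ((hfus z).mpr ⟨s, hs, (Ov.of_ing hzs).symm⟩)

lemma forall_ov_iff_of_forall_ing_ov (htrans : ∀ x y z, P x y → P y z → P x z)
    (hall : ∀ z, Ing P z x → Ov P z y) (u : U) :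
    Ov P u y ↔ ∃ s ∈ insert x {z | Ing P z y}, Ov P s u := by
  constructor
  · rintro ⟨z, hzu, hzy⟩
    exact ⟨z, Or.inr hzy, Ov.of_ing hzu⟩
  · rintro ⟨s, rfl | hsy, hsu⟩
    · obtain ⟨w, hws, hwu⟩ := hsu
      exact ((hall w hws).symm.mono_right htrans hwu).symm
    · exact hsu.symm.mono_right htrans hsy

lemma strongSupplementation_of_forall_msum (htrans : ∀ x y z, P x y → P y z → P x z)
    (H : ∀ (x : U) (S : Set U), (∀ u, Ov P u x ↔ ∃ s ∈ S, Ov P s u) → MSum P x S) :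
    StrongSupplementation P := by
  intro x y hxy
  by_contra! hall
  have hfus := forall_ov_iff_of_forall_ing_ov htrans (x := x) (y := y)
    fun z hz => not_not.mp (hall z hz)
  exact hxy ((H y _ hfus).1 x (Set.mem_insert x _))

theorem stmt_14_general (P : U → U → Prop)
    (htrans : ∀ x y z, P x y → P y z → P x z) :
    (∀ x y, ¬ Ing P x y → ∃ z, Ing P z x ∧ MExt P z y) ↔
      (∀ (x : U) (S : Set U),
        (∀ u, Ov P u x ↔ ∃ s ∈ S, Ov P s u) → MSum P x S) :=
  ⟨fun hssp _ _ => StrongSupplementation.msum_of_forall_ov_iff hssp,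
    strongSupplementation_of_forall_msum htrans⟩

theorem stmt_14 (P : U → U → Prop)
    (htrans : ∀ x y z, P x y → P y z → P x z)
    (hirr : ∀ x, ¬ P x x) :
    (∀ x y, ¬ Ing P x y → ∃ z, Ing P z x ∧ MExt P z y) ↔
      (∀ (x : U) (S : Set U),
        (∀ u, Ov P u x ↔ ∃ s ∈ S, Ov P s u) → MSum P x S) :=
  stmt_14_general P htrans
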